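/- arXiv:1205.1050 — 3 statements merged into one kernel-verified Lean document; each statement's English description precedes it below -/
import Mathlib

section
/- Let Σ be an unsatisfiable set of clauses with w(Σ) ≤ k. If there is no resolution refutation of Σ of width at most k, then there exists an extendible (k+1)-family of partial assignments for Σ. -/
attribute [local instance] Classical.propDecidable

/-- A clause: a finite set of literals, a literal being a variable with a sign. -/
abbrev Clause := Finset (ℕ × Bool)

/-- A total truth assignment satisfies a clause if it makes some literal true. -/
def clauseSat (a : ℕ → Bool) (C : Clause) : Prop :=
  ∃ l ∈ C, (if l.2 then a l.1 else !(a l.1)) = true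

/-- A set of clauses is unsatisfiable (contradictory). -/
def Unsat (S : Set Clause) : Prop := ∀ a : ℕ → Bool, ¬ ∀ C ∈ S, clauseSat a C

/-- The variables occurring in a set of clauses. -/
def varsOf (S : Set Clause) : Set ℕ := {x | ∃ C ∈ S, ∃ b, (x, b) ∈ C}

/-- The resolventCl of C and D upon the variable x. -/
def resolventCl (C D : Clause) (x : ℕ) : Clause := C.erase (x, true) ∪ D.erase (x, false)

/-- A (general, dag-like) resolution derivation from S: a sequence of clauses each of
which is a clause of S or a resolventCl of two earlier clauses. -/
def IsDerivation (S : Set Clause) (L : List Clause) : Prop :=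
  ∀ i < L.length, L.getD i ∅ ∈ S ∨
    ∃ j < i, ∃ k < i, ∃ x : ℕ,
      (x, true) ∈ L.getD j ∅ ∧ (x, false) ∈ L.getD k ∅ ∧
      L.getD i ∅ = resolventCl (L.getD j ∅) (L.getD k ∅) x

/-- A resolution refutation of S: a derivation from S containing the empty clause. -/
def IsRefutation (S : Set Clause) (L : List Clause) : Prop :=
  IsDerivation S L ∧ (∅ : Clause) ∈ L

/-- A partial assignment, presented as a functional finite set of (variable, value)
pairs; its cardinality is the number of assigned variables. -/
def Functional (α : Finset (ℕ × Bool)) : Prop :=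
  ∀ x b b', (x, b) ∈ α → (x, b') ∈ α → b = b'

/-- A partial assignment falsifies a clause if it sets every literal of it false. -/
def Falsifies (α : Finset (ℕ × Bool)) (C : Clause) : Prop := ∀ l ∈ C, (l.1, !l.2) ∈ α

/-- An extendible k-family for S: a nonempty family of partial assignments, none
falsifying a clause of S, each of size at most k, closed under subassignments, and
such that any member of size < k can be extended inside the family so as to assign
any given variable of S. -/
def ExtFamily (S : Set Clause) (k : ℕ) (A : Set (Finset (ℕ × Bool))) : Prop :=
  A.Nonempty ∧
  (∀ α ∈ A, Functional α) ∧
  (∀ α ∈ A, ∀ C ∈ S, ¬ Falsifies α C) ∧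
  (∀ α ∈ A, α.card ≤ k) ∧
  (∀ α ∈ A, ∀ β ⊆ α, β ∈ A) ∧
  (∀ α ∈ A, α.card < k → ∀ x ∈ varsOf S, ∃ β ∈ A, α ⊆ β ∧ ∃ b, (x, b) ∈ β)

/-!
The family consists of the partial assignments of size at most `k + 1` that falsify no clause
derivable from `Σ` by resolution in width `k`. The empty assignment belongs to it because the
empty clause is not derivable. A member `α` of size at most `k` extends to any variable `x`: if
both values of `x` falsified derivable clauses, their resolvent on `x` would be falsified by `α`,
hence have width at most `|α| ≤ k`, hence be derivable as well.
-/

lemma List.mem_iff_exists_getD {α : Type*} {L : List α} {a d : α} :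
    a ∈ L ↔ ∃ i < L.length, L.getD i d = a := by
  simp only [List.mem_iff_getElem]
  constructor
  · rintro ⟨i, hi, rfl⟩; exact ⟨i, hi, List.getD_eq_getElem _ _ hi⟩
  · rintro ⟨i, hi, rfl⟩; exact ⟨i, hi, (List.getD_eq_getElem _ _ hi).symm⟩

lemma isDerivation_concat {S : Set Clause} {L : List Clause} {E : Clause} :
    IsDerivation S (L ++ [E]) ↔ IsDerivation S L ∧ (E ∈ S ∨ ∃ C ∈ L, ∃ D ∈ L, ∃ x : ℕ,
      (x, true) ∈ C ∧ (x, false) ∈ D ∧ E = resolventCl C D x) := by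
  have getD_left : ∀ i < L.length, (L ++ [E]).getD i ∅ = L.getD i ∅ :=
    fun i hi => List.getD_append _ _ _ _ hi
  have getD_last : (L ++ [E]).getD L.length ∅ = E := by
    rw [List.getD_append_right _ _ _ _ le_rfl, Nat.sub_self]; rfl
  constructor
  · intro hd
    refine ⟨fun i hi => ?_, ?_⟩
    · have hi' : i < (L ++ [E]).length := by simp; omega
      rcases hd i hi' with hS | ⟨j, hj, m, hm, x, hxj, hxm, he⟩
      · exact .inl (getD_left i hi ▸ hS)
      · rw [getD_left i hi, getD_left j (hj.trans hi), getD_left m (hm.trans hi)] at *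
        exact .inr ⟨j, hj, m, hm, x, hxj, hxm, he⟩
    · rcases hd L.length (by simp) with hS | ⟨j, hj, m, hm, x, hxj, hxm, he⟩
      · exact .inl (getD_last ▸ hS)
      · rw [getD_last, getD_left j hj, getD_left m hm] at *
        exact .inr ⟨_, List.mem_iff_exists_getD.2 ⟨j, hj, rfl⟩,
          _, List.mem_iff_exists_getD.2 ⟨m, hm, rfl⟩, x, hxj, hxm, he⟩
  · rintro ⟨hd, hE⟩ i hi
    simp only [List.length_append, List.length_singleton] at hi
    rcases Nat.lt_succ_iff_lt_or_eq.1 hi with hi | rfl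
    · rcases hd i hi with hS | ⟨j, hj, m, hm, x, hxj, hxm, he⟩
      · exact .inl (getD_left i hi ▸ hS)
      · right
        refine ⟨j, hj, m, hm, x, ?_⟩
        rw [getD_left i hi, getD_left j (hj.trans hi), getD_left m (hm.trans hi)]
        exact ⟨hxj, hxm, he⟩
    · rw [getD_last]
      rcases hE with hS | ⟨C, hC, D, hD, x, hxC, hxD, rfl⟩
      · exact .inl hS
      · obtain ⟨j, hj, rfl⟩ := List.mem_iff_exists_getD (d := ∅).1 hC
        obtain ⟨m, hm, rfl⟩ := List.mem_iff_exists_getD (d := ∅).1 hD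
        refine .inr ⟨j, hj, m, hm, x, ?_⟩
        rw [getD_left j hj, getD_left m hm]
        exact ⟨hxC, hxD, rfl⟩

lemma IsDerivation.append {S : Set Clause} {L M : List Clause}
    (hL : IsDerivation S L) (hM : IsDerivation S M) : IsDerivation S (L ++ M) := by
  induction M using List.reverseRecOn with
  | nil => simpa using hL
  | append_singleton M E ih =>
    obtain ⟨hM, hE⟩ := isDerivation_concat.1 hM
    rw [← List.append_assoc]
    refine isDerivation_concat.2 ⟨ih hM, hE.imp_right ?_⟩
    rintro ⟨C, hC, D, hD, x, hxC, hxD, rfl⟩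
    exact ⟨C, List.mem_append_right L hC, D, List.mem_append_right L hD, x, hxC, hxD, rfl⟩

-- Only resolvents must have width at most `k`; clauses of `S` may be wider.
inductive WidthDerivable (S : Set Clause) (k : ℕ) : Clause → Prop
  | mem {C : Clause} : C ∈ S → WidthDerivable S k C
  | resolve {C D : Clause} {x : ℕ} : WidthDerivable S k C → WidthDerivable S k D →
      (x, true) ∈ C → (x, false) ∈ D → (resolventCl C D x).card ≤ k →
      WidthDerivable S k (resolventCl C D x)

lemma WidthDerivable.exists_derivation {S : Set Clause} {k : ℕ} {C : Clause}
    (hC : WidthDerivable S k C) (hw : ∀ C ∈ S, C.card ≤ k) :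
    ∃ L : List Clause, IsDerivation S L ∧ (∀ E ∈ L, E.card ≤ k) ∧ C ∈ L := by
  induction hC with
  | @mem C hS =>
    refine ⟨[C], isDerivation_concat (L := []).2 ⟨by simp [IsDerivation], .inl hS⟩, ?_, by simp⟩
    simpa using hw C hS
  | @resolve C D x _ _ hxC hxD hcard ihC ihD =>
    obtain ⟨L, hL, hwL, hCL⟩ := ihC
    obtain ⟨M, hM, hwM, hDM⟩ := ihD
    refine ⟨L ++ M ++ [resolventCl C D x], isDerivation_concat.2 ⟨hL.append hM, .inr
      ⟨C, List.mem_append_left M hCL, D, List.mem_append_right L hDM, x, hxC, hxD, rfl⟩⟩,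
      ?_, by simp⟩
    simp only [List.mem_append, List.mem_singleton]
    rintro E ((hE | hE) | rfl)
    exacts [hwL E hE, hwM E hE, hcard]

lemma Falsifies.mono {α β : Finset (ℕ × Bool)} {C : Clause} (hC : Falsifies α C)
    (hαβ : α ⊆ β) : Falsifies β C :=
  fun l hl => hαβ (hC l hl)

lemma Falsifies.union {α : Finset (ℕ × Bool)} {C D : Clause} (hC : Falsifies α C)
    (hD : Falsifies α D) : Falsifies α (C ∪ D) := by
  intro l hl
  rcases Finset.mem_union.1 hl with hl | hl
  exacts [hC l hl, hD l hl]

lemma Falsifies.card_le {α : Finset (ℕ × Bool)} {C : Clause} (hC : Falsifies α C) :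
    C.card ≤ α.card :=
  Finset.card_le_card_of_injOn (fun l => (l.1, !l.2)) hC
    (fun l _ l' _ h => by simpa [Prod.ext_iff] using h)

lemma eq_empty_of_falsifies_empty {C : Clause} (hC : Falsifies ∅ C) : C = ∅ :=
  Finset.eq_empty_of_forall_notMem fun l hl => by simpa using hC l hl

lemma Falsifies.erase_of_insert {α : Finset (ℕ × Bool)} {C : Clause} {x : ℕ} {b : Bool}
    (hC : Falsifies (insert (x, b) α) C) : Falsifies α (C.erase (x, !b)) := by
  intro l hl
  obtain ⟨hne, hlC⟩ := Finset.mem_erase.1 hl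
  refine (Finset.mem_insert.1 (hC l hlC)).resolve_left fun h => hne ?_
  simp only [Prod.ext_iff, Bool.not_eq_eq_eq_not] at h
  exact Prod.ext h.1 h.2

lemma Functional.insert {α : Finset (ℕ × Bool)} (hα : Functional α) {x : ℕ}
    (hx : ∀ c, (x, c) ∉ α) (b : Bool) : Functional (insert (x, b) α) := by
  intro y c c' hc hc'
  simp only [Finset.mem_insert, Prod.ext_iff] at hc hc'
  rcases hc with ⟨rfl, rfl⟩ | hc <;> rcases hc' with ⟨hy, rfl⟩ | hc'
  · rfl
  · exact absurd hc' (hx c')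
  · exact absurd (hy ▸ hc) (hx c)
  · exact hα y c c' hc hc'

def AvoidsDerivable (S : Set Clause) (k : ℕ) (α : Finset (ℕ × Bool)) : Prop :=
  ∀ C, WidthDerivable S k C → ¬ Falsifies α C

lemma AvoidsDerivable.anti {S : Set Clause} {k : ℕ} {α β : Finset (ℕ × Bool)}
    (hα : AvoidsDerivable S k α) (hβα : β ⊆ α) : AvoidsDerivable S k β :=
  fun C hC hβ => hα C hC (hβ.mono hβα)

lemma AvoidsDerivable.exists_insert {S : Set Clause} {k : ℕ} {α : Finset (ℕ × Bool)}
    (hα : AvoidsDerivable S k α) (hcard : α.card ≤ k) (x : ℕ) :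
    ∃ b, AvoidsDerivable S k (insert (x, b) α) := by
  by_contra! h
  obtain ⟨C, hC, hFC⟩ : ∃ C, WidthDerivable S k C ∧ Falsifies (insert (x, false) α) C := by
    simpa [AvoidsDerivable] using h false
  obtain ⟨D, hD, hFD⟩ : ∃ D, WidthDerivable S k D ∧ Falsifies (insert (x, true) α) D := by
    simpa [AvoidsDerivable] using h true
  have hxC : (x, true) ∈ C := by
    by_contra hx
    exact hα C hC (by simpa [Finset.erase_eq_of_notMem hx] using hFC.erase_of_insert)
  have hxD : (x, false) ∈ D := by
    by_contra hx
    exact hα D hD (by simpa [Finset.erase_eq_of_notMem hx] using hFD.erase_of_insert)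
  have hR : Falsifies α (resolventCl C D x) := hFC.erase_of_insert.union hFD.erase_of_insert
  exact hα _ (.resolve hC hD hxC hxD (hR.card_le.trans hcard)) hR

theorem extFamily_of_not_widthDerivable_empty {S : Set Clause} {k : ℕ}
    (h : ¬ WidthDerivable S k ∅) :
    ExtFamily S (k + 1) {α | Functional α ∧ α.card ≤ k + 1 ∧ AvoidsDerivable S k α} := by
  refine ⟨⟨∅, by simp [Functional], by simp, ?_⟩, fun α hα => hα.1,
    fun α hα C hC => hα.2.2 C (.mem hC), fun α hα => hα.2.1, ?_, ?_⟩
  · intro C hC hF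
    exact h (eq_empty_of_falsifies_empty hF ▸ hC)
  · rintro α ⟨hfun, hcard, hα⟩ β hβα
    exact ⟨fun x b b' hb hb' => hfun x b b' (hβα hb) (hβα hb'),
      (Finset.card_le_card hβα).trans hcard, hα.anti hβα⟩
  · rintro α ⟨hfun, -, hα⟩ hcard x -
    by_cases hx : ∃ b, (x, b) ∈ α
    · exact ⟨α, ⟨hfun, hcard.le, hα⟩, subset_rfl, hx⟩
    simp only [not_exists] at hx
    obtain ⟨b, hb⟩ := hα.exists_insert (Nat.lt_succ_iff.1 hcard) x
    refine ⟨insert (x, b) α, ⟨hfun.insert hx b, ?_, hb⟩, Finset.subset_insert _ _,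
      b, Finset.mem_insert_self _ _⟩
    rwa [Finset.card_insert_of_notMem (hx b)]

theorem extendible_family_of_no_narrow_refutation_general (S : Set Clause) (k : ℕ)
    (hw : ∀ C ∈ S, C.card ≤ k)
    (h : ¬ ∃ L : List Clause, IsRefutation S L ∧ ∀ C ∈ L, C.card ≤ k) :
    ∃ A : Set (Finset (ℕ × Bool)), ExtFamily S (k + 1) A := by
  refine ⟨_, extFamily_of_not_widthDerivable_empty fun hempty => h ?_⟩
  obtain ⟨L, hL, hwL, hemptyL⟩ := hempty.exists_derivation hw
  exact ⟨L, ⟨hL, hemptyL⟩, hwL⟩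

/-- If Σ is unsatisfiable, w(Σ) ≤ k, and there is no resolution refutation of Σ of
width at most k, then there is an extendible (k+1)-family for Σ. -/
theorem extendible_family_of_no_narrow_refutation (S : Set Clause) (k : ℕ)
    (hU : Unsat S) (hw : ∀ C ∈ S, C.card ≤ k)
    (h : ¬ ∃ L : List Clause, IsRefutation S L ∧ ∀ C ∈ L, C.card ≤ k) :
    ∃ A : Set (Finset (ℕ × Bool)), ExtFamily S (k + 1) A :=
  extendible_family_of_no_narrow_refutation_general S k hw h
end

section
/- Let Σ be an unsatisfiable set of clauses. If there exists an extendible (k+1)-family of partial assignments for Σ, then there is no resolution refutation of Σ of width at most k. -/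
attribute [local instance] Classical.propDecidable

/-! No member of an extendible (k+1)-family falsifies a clause of width at most k derived
from Σ: if a member falsifies a resolvent, its restriction to the at most k literals of the
resolvent lies in the family and can be extended to assign the pivot variable, and the
extension then falsifies one of the two premises. The empty assignment belongs to the
family and falsifies the empty clause, so no refutation has width at most k. -/

def falsifier (C : Clause) : Finset (ℕ × Bool) := C.image fun l => (l.1, !l.2)

theorem falsifies_iff_falsifier_subset {α : Finset (ℕ × Bool)} {C : Clause} :
    Falsifies α C ↔ falsifier C ⊆ α := by
  simp [Falsifies, falsifier, Finset.image_subset_iff]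

theorem card_falsifier_le (C : Clause) : (falsifier C).card ≤ C.card :=
  Finset.card_image_le

theorem resolventCl_subset_union (C D : Clause) (x : ℕ) : resolventCl C D x ⊆ C ∪ D :=
  Finset.union_subset_union (Finset.erase_subset _ _) (Finset.erase_subset _ _)

/-- Soundness of resolution for partial assignments that assign the pivot. -/
theorem Falsifies.of_resolventCl {β : Finset (ℕ × Bool)} {C D : Clause} {x : ℕ} {b : Bool}
    (h : Falsifies β (resolventCl C D x)) (hx : (x, b) ∈ β) :
    Falsifies β C ∨ Falsifies β D := by
  cases b
  · left
    intro l hl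
    by_cases hlx : l = (x, true)
    · subst hlx; exact hx
    · exact h l (Finset.mem_union_left _ (Finset.mem_erase.mpr ⟨hlx, hl⟩))
  · right
    intro l hl
    by_cases hlx : l = (x, false)
    · subst hlx; exact hx
    · exact h l (Finset.mem_union_right _ (Finset.mem_erase.mpr ⟨hlx, hl⟩))

theorem IsDerivation.induction {S : Set Clause} {L : List Clause} {P : Clause → Prop}
    (hL : IsDerivation S L) (hS : ∀ C ∈ S, P C)
    (hres : ∀ C D x, (x, true) ∈ C → (x, false) ∈ D → resolventCl C D x ∈ L →
      P C → P D → P (resolventCl C D x)) :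
    ∀ C ∈ L, P C := by
  suffices h : ∀ i < L.length, P (L.getD i ∅) by
    intro C hC
    obtain ⟨i, hi, rfl⟩ := List.mem_iff_getElem.mp hC
    simpa only [List.getD_eq_getElem L ∅ hi] using h i hi
  intro i
  induction i using Nat.strong_induction_on with
  | _ i ih =>
    intro hi
    rcases hL i hi with hmem | ⟨j, hj, m, hm, x, hxj, hxm, hi_eq⟩
    · exact hS _ hmem
    · have hmemL : L.getD i ∅ ∈ L := by
        rw [List.getD_eq_getElem L ∅ hi]; exact List.getElem_mem hi
      rw [hi_eq] at hmemL ⊢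
      exact hres _ _ x hxj hxm hmemL (ih j hj (hj.trans hi)) (ih m hm (hm.trans hi))

namespace ExtFamily

variable {S : Set Clause} {k : ℕ} {A : Set (Finset (ℕ × Bool))}

theorem empty_mem (hA : ExtFamily S k A) : ∅ ∈ A := by
  obtain ⟨α, hα⟩ := hA.1
  exact hA.2.2.2.2.1 α hα ∅ (Finset.empty_subset α)

theorem not_falsifies_resolventCl (hA : ExtFamily S (k + 1) A) {C D : Clause} {x : ℕ}
    (hx : x ∈ varsOf S) (hwidth : (resolventCl C D x).card ≤ k)
    (hC : ∀ α ∈ A, ¬ Falsifies α C) (hD : ∀ α ∈ A, ¬ Falsifies α D) :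
    ∀ α ∈ A, ¬ Falsifies α (resolventCl C D x) := by
  obtain ⟨-, -, -, -, hdown, hext⟩ := hA
  intro α hα hfals
  set R := resolventCl C D x
  have hsub : falsifier R ⊆ α := falsifies_iff_falsifier_subset.mp hfals
  have hcard : (falsifier R).card < k + 1 := by
    have := card_falsifier_le R; omega
  obtain ⟨β, hβ, hRβ, b, hxβ⟩ := hext _ (hdown α hα _ hsub) hcard x hx
  have hβR : Falsifies β R := falsifies_iff_falsifier_subset.mpr hRβ
  rcases hβR.of_resolventCl hxβ with hβC | hβD
  exacts [hC β hβ hβC, hD β hβ hβD]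

theorem not_falsifies_of_mem_derivation (hA : ExtFamily S (k + 1) A) {L : List Clause}
    (hL : IsDerivation S L) (hw : ∀ C ∈ L, C.card ≤ k) {C : Clause} (hC : C ∈ L) :
    ∀ α ∈ A, ¬ Falsifies α C := by
  -- The pivot must be a variable of `S` for the extension property to apply.
  suffices h : ∀ C ∈ L, (∀ l ∈ C, l.1 ∈ varsOf S) ∧ ∀ α ∈ A, ¬ Falsifies α C from
    (h C hC).2
  refine hL.induction (fun C hCS => ⟨fun l hl => ⟨C, hCS, l.2, hl⟩,
    fun α hα => hA.2.2.1 α hα C hCS⟩) ?_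
  rintro C D x hxC - hRL ⟨hvarsC, hC⟩ ⟨hvarsD, hD⟩
  refine ⟨fun l hl => ?_, hA.not_falsifies_resolventCl (hvarsC _ hxC) (hw _ hRL) hC hD⟩
  rcases Finset.mem_union.mp (resolventCl_subset_union C D x hl) with hl | hl
  exacts [hvarsC l hl, hvarsD l hl]

end ExtFamily

theorem no_narrow_refutation_of_extendible_family_general (S : Set Clause) (k : ℕ)
    (A : Set (Finset (ℕ × Bool))) (hA : ExtFamily S (k + 1) A) :
    ¬ ∃ L : List Clause, IsRefutation S L ∧ ∀ C ∈ L, C.card ≤ k := by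
  rintro ⟨L, ⟨hL, hempty⟩, hw⟩
  exact hA.not_falsifies_of_mem_derivation hL hw hempty ∅ hA.empty_mem
    (fun l hl => absurd hl (Finset.notMem_empty l))

/-- If Σ is unsatisfiable and there is an extendible (k+1)-family for Σ, then there is
no resolution refutation of Σ of width at most k. -/
theorem no_narrow_refutation_of_extendible_family (S : Set Clause) (k : ℕ)
    (hU : Unsat S) (A : Set (Finset (ℕ × Bool))) (hA : ExtFamily S (k + 1) A) :
    ¬ ∃ L : List Clause, IsRefutation S L ∧ ∀ C ∈ L, C.card ≤ k :=
  no_narrow_refutation_of_extendible_family_general S k A hA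
end

section
/- Any tree-style resolution refutation of an unsatisfiable clause set Σ can be transformed into a regular tree-style refutation of Σ of size at most that of the original refutation. -/
attribute [local instance] Classical.propDecidable

/-- Tree-style resolution derivations: a binary tree whose leaves are (occurrences of)
input clauses and whose internal nodes are resolution inferences on a stated variable. -/
inductive RTree where
  | leaf : Clause → RTree
  | node : ℕ → RTree → RTree → RTree

/-- Conclusion clause of a resolution tree. -/
def conc : RTree → Clause
  | .leaf C => C
  | .node x l r => (conc l).erase (x, true) ∪ (conc r).erase (x, false)

/-- Validity: leaves are clauses of S, and each step resolves a variable occurring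
positively in the left premiss and negatively in the right premiss. -/
def valid (S : Set Clause) : RTree → Prop
  | .leaf C => C ∈ S
  | .node x l r => (x, true) ∈ conc l ∧ (x, false) ∈ conc r ∧ valid S l ∧ valid S r

/-- Size: the number of clause occurrences. -/
def tsize : RTree → ℕ
  | .leaf _ => 1
  | .node _ l r => tsize l + tsize r + 1

/-- Width: the maximum width of a clause occurring in the tree. -/
def twidth : RTree → ℕ
  | .leaf C => C.card
  | .node x l r => max (conc (RTree.node x l r)).card (max (twidth l) (twidth r))

/-- The variables resolved upon in a tree. -/
def resolvedVars : RTree → Finset ℕ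
  | .leaf _ => ∅
  | .node x l r => insert x (resolvedVars l ∪ resolvedVars r)

/-- Regularity: no variable is resolved upon twice along any path. -/
def regular : RTree → Prop
  | .leaf _ => True
  | .node x l r => x ∉ resolvedVars l ∧ x ∉ resolvedVars r ∧ regular l ∧ regular r

/-- A tree-style resolution refutation of S. -/
def IsTreeRefutation (S : Set Clause) (t : RTree) : Prop := valid S t ∧ conc t = ∅

/-- S has a regular resolution refutation of width at most k.  (Regular refutations
unfold, width for width, into regular tree-style refutations, so regular refutation
width is captured by regular trees.) -/
def HasRegularRefutationOfWidth (S : Set Clause) (k : ℕ) : Prop :=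
  ∃ t : RTree, IsTreeRefutation S t ∧ regular t ∧ twidth t ≤ k

/-- Tseitin's pruning. `P` collects the literals that the resolution steps below the current
subtree resolve away, so extra literals from `P` in a conclusion are harmless: a step on a
variable already resolved below is replaced by the premiss holding the literal cut there, and a
step whose pruned premiss has lost its pivot literal is replaced by that premiss. -/
def prune (P : Clause) : RTree → RTree
  | .leaf C => .leaf C
  | .node x l r =>
    if (x, true) ∈ P then prune P l
    else if (x, false) ∈ P then prune P r
    else
      let l' := prune (insert (x, true) P) l
      let r' := prune (insert (x, false) P) r
      if (x, true) ∈ conc l' then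
        if (x, false) ∈ conc r' then .node x l' r' else r'
      else l'

theorem tsize_prune_le (P : Clause) (t : RTree) : tsize (prune P t) ≤ tsize t := by
  induction t generalizing P with
  | leaf C => simp [prune]
  | node x l r ihl ihr =>
    have := ihl P
    have := ihr P
    have := ihl (insert (x, true) P)
    have := ihr (insert (x, false) P)
    simp only [prune]
    split_ifs <;> grind [tsize]

theorem conc_prune_subset (P : Clause) (t : RTree) : conc (prune P t) ⊆ conc t ∪ P := by
  induction t generalizing P with
  | leaf C => simp [prune, conc]
  | node x l r ihl ihr =>
    have := ihl P
    have := ihr P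
    have := ihl (insert (x, true) P)
    have := ihr (insert (x, false) P)
    simp only [prune]
    split_ifs <;>
      simp only [conc, Finset.subset_iff, Finset.mem_union, Finset.mem_erase,
        Finset.mem_insert] at * <;>
      grind

theorem valid_prune {S : Set Clause} (P : Clause) {t : RTree} (ht : valid S t) :
    valid S (prune P t) := by
  induction t generalizing P with
  | leaf C => exact ht
  | node x l r ihl ihr =>
    obtain ⟨-, -, hl, hr⟩ := ht
    simp only [prune]
    split_ifs with _ _ hxl hxr
    · exact ihl P hl
    · exact ihr P hr
    · exact ⟨hxl, hxr, ihl _ hl, ihr _ hr⟩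
    · exact ihr _ hr
    · exact ihl _ hl

theorem not_mem_resolvedVars_prune {P : Clause} {x : ℕ} {b : Bool} (hx : (x, b) ∈ P)
    (t : RTree) : x ∉ resolvedVars (prune P t) := by
  induction t generalizing P with
  | leaf C => simp [prune, resolvedVars]
  | node y l r ihl ihr =>
    simp only [prune]
    split_ifs with hyP hyP'
    · exact ihl hx
    · exact ihr hx
    · have hxy : x ≠ y := by rintro rfl; cases b <;> contradiction
      simp only [resolvedVars, Finset.mem_insert, Finset.mem_union, not_or]
      exact ⟨hxy, ihl (Finset.mem_insert_of_mem hx), ihr (Finset.mem_insert_of_mem hx)⟩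
    · exact ihr (Finset.mem_insert_of_mem hx)
    · exact ihl (Finset.mem_insert_of_mem hx)

theorem regular_prune (P : Clause) (t : RTree) : regular (prune P t) := by
  induction t generalizing P with
  | leaf C => trivial
  | node x l r ihl ihr =>
    simp only [prune]
    split_ifs
    · exact ihl P
    · exact ihr P
    · exact ⟨not_mem_resolvedVars_prune (Finset.mem_insert_self _ _) _,
        not_mem_resolvedVars_prune (Finset.mem_insert_self _ _) _, ihl _, ihr _⟩
    · exact ihr _
    · exact ihl _

theorem pruning_general (S : Set Clause) (t : RTree) (ht : IsTreeRefutation S t) :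
    ∃ t' : RTree, IsTreeRefutation S t' ∧ regular t' ∧ tsize t' ≤ tsize t := by
  obtain ⟨hv, hc⟩ := ht
  refine ⟨prune ∅ t, ⟨valid_prune ∅ hv, ?_⟩, regular_prune ∅ t, tsize_prune_le ∅ t⟩
  simpa [hc] using conc_prune_subset ∅ t

/-- Any tree-style resolution refutation of an unsatisfiable clause set can be pruned
to a regular tree-style refutation of size at most that of the original. -/
theorem pruning (S : Set Clause) (hU : Unsat S) (t : RTree) (ht : IsTreeRefutation S t) :
    ∃ t' : RTree, IsTreeRefutation S t' ∧ regular t' ∧ tsize t' ≤ tsize t :=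
  pruning_general S t ht
end
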